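/- arXiv:2407.00666 — 6 statements merged into one kernel-verified Lean document; each statement's English description precedes it below -/
import Mathlib

section
/- In the one-step (static) two-player installation game, if A(x) ≤ 0 then the pair (I¹, I²) = (0, 0) is the unique Nash equilibrium. -/
noncomputable section

/-- One-step payoff of a player with initial capacity `yi` installing `Ii`,
when the other player's resulting capacity is `Yj`. -/
def payoff (ρ k β μ c x yi Ii Yj : ℝ) : ℝ :=
  (yi + Ii) * (x * ρ + μ * k - β * k * ((yi + Ii) + Yj)) / (ρ * (ρ + k)) - c * Ii

/-- The threshold `A(x) = (xρ + μk − cρ(ρ+k))/(2βk)`. -/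
def Afun (ρ k β μ c x : ℝ) : ℝ := (x * ρ + μ * k - c * ρ * (ρ + k)) / (2 * β * k)

/-- `(I₁, I₂)` is a feasible Nash equilibrium of the one-step game. -/
def IsNash (ρ k β θ μ c x y₁ y₂ I₁ I₂ : ℝ) : Prop :=
  0 ≤ I₁ ∧ 0 ≤ I₂ ∧ y₁ + I₁ + (y₂ + I₂) ≤ θ ∧
  (∀ I₁' : ℝ, 0 ≤ I₁' → y₁ + I₁' + (y₂ + I₂) ≤ θ →
    payoff ρ k β μ c x y₁ I₁' (y₂ + I₂) ≤ payoff ρ k β μ c x y₁ I₁ (y₂ + I₂)) ∧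
  (∀ I₂' : ℝ, 0 ≤ I₂' → y₂ + I₂' + (y₁ + I₁) ≤ θ →
    payoff ρ k β μ c x y₂ I₂' (y₁ + I₁) ≤ payoff ρ k β μ c x y₂ I₂ (y₁ + I₁))

private lemma key_eq (ρ k β μ c x yi I Yj : ℝ) (hρ : 0 < ρ) (hk : 0 < k) :
    payoff ρ k β μ c x yi I Yj
      + I * (β * k * (2 * yi + I + Yj) - (x * ρ + μ * k - c * (ρ * (ρ + k)))) / (ρ * (ρ + k))
      = payoff ρ k β μ c x yi 0 Yj := by
  have hD : (ρ * (ρ + k)) ≠ 0 := by positivity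
  unfold payoff
  field_simp
  ring

private lemma key_le (ρ k β μ c x yi I Yj : ℝ) (hρ : 0 < ρ) (hk : 0 < k) (hβ : 0 < β)
    (hyi : 0 ≤ yi) (hYj : 0 ≤ Yj) (hI : 0 ≤ I)
    (hP : x * ρ + μ * k - c * (ρ * (ρ + k)) ≤ 0) :
    payoff ρ k β μ c x yi I Yj ≤ payoff ρ k β μ c x yi 0 Yj := by
  rw [← key_eq ρ k β μ c x yi I Yj hρ hk]
  have h1 : 0 ≤ I * (β * k * (2 * yi + I + Yj) - (x * ρ + μ * k - c * (ρ * (ρ + k)))) / (ρ * (ρ + k)) := by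
    apply div_nonneg _ (by positivity)
    apply mul_nonneg hI
    nlinarith [mul_nonneg (mul_nonneg hβ.le hk.le) (show (0:ℝ) ≤ 2*yi+I+Yj by linarith)]
  linarith

private lemma key_lt (ρ k β μ c x yi I Yj : ℝ) (hρ : 0 < ρ) (hk : 0 < k) (hβ : 0 < β)
    (hyi : 0 ≤ yi) (hYj : 0 ≤ Yj) (hI : 0 < I)
    (hP : x * ρ + μ * k - c * (ρ * (ρ + k)) ≤ 0) :
    payoff ρ k β μ c x yi I Yj < payoff ρ k β μ c x yi 0 Yj := by
  rw [← key_eq ρ k β μ c x yi I Yj hρ hk]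
  have h1 : 0 < I * (β * k * (2 * yi + I + Yj) - (x * ρ + μ * k - c * (ρ * (ρ + k)))) / (ρ * (ρ + k)) := by
    apply div_pos _ (by positivity)
    apply mul_pos hI
    nlinarith [mul_pos (mul_pos hβ hk) (show (0:ℝ) < 2*yi+I+Yj by linarith)]
  linarith

/-- If `A(x) ≤ 0`, then `(0, 0)` is the unique Nash equilibrium of the one-step game. -/
theorem stmt2 (ρ k β θ c μ x y₁ y₂ : ℝ)
    (hρ : 0 < ρ) (hk : 0 < k) (hβ : 0 < β) (hθ : 0 < θ) (hc : 0 ≤ c)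
    (hy₁ : 0 ≤ y₁) (hy₂ : 0 ≤ y₂) (hy : y₁ + y₂ ≤ θ)
    (hA : Afun ρ k β μ c x ≤ 0) :
    IsNash ρ k β θ μ c x y₁ y₂ 0 0 ∧
    ∀ I₁ I₂ : ℝ, IsNash ρ k β θ μ c x y₁ y₂ I₁ I₂ → I₁ = 0 ∧ I₂ = 0 := by
  have hP : x * ρ + μ * k - c * (ρ * (ρ + k)) ≤ 0 := by
    have h2 : 0 < 2 * β * k := by positivity
    have := (div_nonpos_iff.mp hA)
    rcases this with ⟨h1, _⟩ | ⟨h1, h2'⟩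
    · nlinarith
    · nlinarith
  constructor
  · refine ⟨le_refl 0, le_refl 0, by simpa using hy, ?_, ?_⟩
    · intro I₁' hI₁' _
      simpa using key_le ρ k β μ c x y₁ I₁' (y₂ + 0) hρ hk hβ hy₁ (by linarith) hI₁' hP
    · intro I₂' hI₂' _
      simpa using key_le ρ k β μ c x y₂ I₂' (y₁ + 0) hρ hk hβ hy₂ (by linarith) hI₂' hP
  · rintro I₁ I₂ ⟨hI₁, hI₂, hfeas, hbr₁, hbr₂⟩
    have hI₁0 : I₁ = 0 := by
      by_contra h
      have hI₁pos : 0 < I₁ := lt_of_le_of_ne hI₁ (Ne.symm h)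
      have hf : y₁ + 0 + (y₂ + I₂) ≤ θ := by linarith
      have := hbr₁ 0 le_rfl hf
      have hlt := key_lt ρ k β μ c x y₁ I₁ (y₂ + I₂) hρ hk hβ hy₁ (by linarith) hI₁pos hP
      linarith
    have hI₂0 : I₂ = 0 := by
      by_contra h
      have hI₂pos : 0 < I₂ := lt_of_le_of_ne hI₂ (Ne.symm h)
      have hf : y₂ + 0 + (y₁ + I₁) ≤ θ := by linarith
      have := hbr₂ 0 le_rfl hf
      have hlt := key_lt ρ k β μ c x y₂ I₂ (y₁ + I₁) hρ hk hβ hy₂ (by linarith) hI₂pos hP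
      linarith
    exact ⟨hI₁0, hI₂0⟩
end
end

section
/- In the one-step (static) two-player installation game, assume y₁ < (2/3)A(x), y₂ < (2/3)A(x) and (4/3)A(x) ≤ θ. Then the pair Iᵢ = (2/3)A(x) − yᵢ, i = 1, 2, is the unique Nash equilibrium; in particular, at equilibrium both players end with the same installed capacity Y₁ = Y₂ = (2/3)A(x), regardless of the initial capacities. -/
noncomputable section

set_option maxHeartbeats 1000000

lemma payoff_sub (ρ k β μ c x yi Ii Ii' Yj : ℝ) (hρ : 0 < ρ) (hk : 0 < k) (hβ : 0 < β) :
    payoff ρ k β μ c x yi Ii Yj - payoff ρ k β μ c x yi Ii' Yj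
      = β * k / (ρ * (ρ + k)) *
        ((yi + Ii' - (Afun ρ k β μ c x - Yj / 2)) ^ 2
          - (yi + Ii - (Afun ρ k β μ c x - Yj / 2)) ^ 2) := by
  have h1 : ρ ≠ 0 := hρ.ne'
  have h2 : ρ + k ≠ 0 := by positivity
  have h3 : β ≠ 0 := hβ.ne'
  have h4 : k ≠ 0 := hk.ne'
  unfold payoff Afun
  field_simp
  ring

lemma keyBR (a θ y₁ y₂ Y₁ Y₂ : ℝ)
    (h1 : y₁ < 2 / 3 * a) (h2 : y₂ < 2 / 3 * a) (h3 : 4 / 3 * a ≤ θ)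
    (hY₁ : y₁ ≤ Y₁) (hY₂ : y₂ ≤ Y₂) (hsum : Y₁ + Y₂ ≤ θ)
    (opt₁ : ∀ Y', y₁ ≤ Y' → Y' + Y₂ ≤ θ → (Y₁ - (a - Y₂ / 2)) ^ 2 ≤ (Y' - (a - Y₂ / 2)) ^ 2)
    (opt₂ : ∀ Y', y₂ ≤ Y' → Y' + Y₁ ≤ θ → (Y₂ - (a - Y₁ / 2)) ^ 2 ≤ (Y' - (a - Y₁ / 2)) ^ 2) :
    Y₁ = a - Y₂ / 2 := by
  rcases lt_trichotomy Y₁ (a - Y₂ / 2) with hlt | heq | hgt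
  · by_cases hfeas : (a - Y₂ / 2) + Y₂ ≤ θ
    · have := opt₁ (a - Y₂ / 2) (by linarith) hfeas
      nlinarith
    · push_neg at hfeas
      have hY2big : 2 / 3 * a < Y₂ := by linarith
      have hYeq : Y₁ = θ - Y₂ := by
        have := opt₁ (θ - Y₂) (by linarith) (by linarith)
        nlinarith
      rcases le_or_gt Y₂ (a - Y₁ / 2) with hle | hlt2
      · nlinarith
      · rcases le_or_gt y₂ (a - Y₁ / 2) with hyB | hyB
        · have := opt₂ (a - Y₁ / 2) hyB (by linarith)
          nlinarith
        · have := opt₂ y₂ le_rfl (by linarith)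
          nlinarith
  · exact heq
  · rcases le_or_gt y₁ (a - Y₂ / 2) with hyB | hyB
    · have := opt₁ (a - Y₂ / 2) hyB (by nlinarith)
      nlinarith
    · have hYy : Y₁ = y₁ := by
        have := opt₁ y₁ le_rfl (by linarith)
        nlinarith
      have hY2eq : Y₂ = a - y₁ / 2 := by
        have := opt₂ (a - y₁ / 2) (by linarith) (by linarith [hYy])
        nlinarith
      linarith

/-- If `y₁ < (2/3)A(x)`, `y₂ < (2/3)A(x)` and `(4/3)A(x) ≤ θ`, then
`Iᵢ = (2/3)A(x) − yᵢ` is the unique Nash equilibrium, and at equilibrium both players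
end with the same installed capacity `(2/3)A(x)`, regardless of initial capacities. -/
theorem stmt3 (ρ k β θ c μ x y₁ y₂ : ℝ)
    (hρ : 0 < ρ) (hk : 0 < k) (hβ : 0 < β) (hθ : 0 < θ) (hc : 0 ≤ c)
    (hy₁ : 0 ≤ y₁) (hy₂ : 0 ≤ y₂) (hy : y₁ + y₂ ≤ θ)
    (h1 : y₁ < 2 / 3 * Afun ρ k β μ c x) (h2 : y₂ < 2 / 3 * Afun ρ k β μ c x)
    (h3 : 4 / 3 * Afun ρ k β μ c x ≤ θ) :
    IsNash ρ k β θ μ c x y₁ y₂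
      (2 / 3 * Afun ρ k β μ c x - y₁) (2 / 3 * Afun ρ k β μ c x - y₂) ∧
    (∀ I₁ I₂ : ℝ, IsNash ρ k β θ μ c x y₁ y₂ I₁ I₂ →
      I₁ = 2 / 3 * Afun ρ k β μ c x - y₁ ∧ I₂ = 2 / 3 * Afun ρ k β μ c x - y₂) ∧
    y₁ + (2 / 3 * Afun ρ k β μ c x - y₁) = 2 / 3 * Afun ρ k β μ c x ∧
    y₂ + (2 / 3 * Afun ρ k β μ c x - y₂) = 2 / 3 * Afun ρ k β μ c x := by
  have hq : 0 < β * k / (ρ * (ρ + k)) := by positivity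
  refine ⟨⟨by linarith, by linarith, by linarith, ?_, ?_⟩, ?_, by ring, by ring⟩
  · intro I' hI' hfeas
    have hps := payoff_sub ρ k β μ c x y₁ (2 / 3 * Afun ρ k β μ c x - y₁) I'
      (y₂ + (2 / 3 * Afun ρ k β μ c x - y₂)) hρ hk hβ
    nlinarith [mul_nonneg hq.le
      (sq_nonneg (y₁ + I' - (Afun ρ k β μ c x - (y₂ + (2 / 3 * Afun ρ k β μ c x - y₂)) / 2)))]
  · intro I' hI' hfeas
    have hps := payoff_sub ρ k β μ c x y₂ (2 / 3 * Afun ρ k β μ c x - y₂) I'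
      (y₁ + (2 / 3 * Afun ρ k β μ c x - y₁)) hρ hk hβ
    nlinarith [mul_nonneg hq.le
      (sq_nonneg (y₂ + I' - (Afun ρ k β μ c x - (y₁ + (2 / 3 * Afun ρ k β μ c x - y₁)) / 2)))]
  · rintro I₁ I₂ ⟨hI₁, hI₂, hf, h4, h5⟩
    have opt₁ : ∀ Y', y₁ ≤ Y' → Y' + (y₂ + I₂) ≤ θ →
        (y₁ + I₁ - (Afun ρ k β μ c x - (y₂ + I₂) / 2)) ^ 2
          ≤ (Y' - (Afun ρ k β μ c x - (y₂ + I₂) / 2)) ^ 2 := by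
      intro Y' hle hfe
      have h := h4 (Y' - y₁) (by linarith) (by linarith)
      have hps := payoff_sub ρ k β μ c x y₁ I₁ (Y' - y₁) (y₂ + I₂) hρ hk hβ
      nlinarith [hq, h, hps]
    have opt₂ : ∀ Y', y₂ ≤ Y' → Y' + (y₁ + I₁) ≤ θ →
        (y₂ + I₂ - (Afun ρ k β μ c x - (y₁ + I₁) / 2)) ^ 2
          ≤ (Y' - (Afun ρ k β μ c x - (y₁ + I₁) / 2)) ^ 2 := by
      intro Y' hle hfe
      have h := h5 (Y' - y₂) (by linarith) (by linarith)
      have hps := payoff_sub ρ k β μ c x y₂ I₂ (Y' - y₂) (y₁ + I₁) hρ hk hβ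
      nlinarith [hq, h, hps]
    have e₁ := keyBR (Afun ρ k β μ c x) θ y₁ y₂ (y₁ + I₁) (y₂ + I₂)
      h1 h2 h3 (by linarith) (by linarith) (by linarith) opt₁ opt₂
    have e₂ := keyBR (Afun ρ k β μ c x) θ y₂ y₁ (y₂ + I₂) (y₁ + I₁)
      h2 h1 h3 (by linarith) (by linarith) (by linarith) opt₂ opt₁
    constructor <;> linarith
end
end

section
/- In the one-step (static) two-player installation game, assume y₂ ≥ (2/3)A(x). Then the pair (I¹, I²) with I² = 0 and I¹ = max{0, min{θ − y₁ − y₂, A(x) − y₂/2 − y₁}} is a Nash equilibrium. -/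
noncomputable section

lemma key (ρ k β μ c x yi Yj I I' : ℝ) (hρ : 0 < ρ) (hk : 0 < k) (hβ : 0 < β)
    (h : 0 ≤ (I - I') * (2 * Afun ρ k β μ c x - (yi + I) - (yi + I') - Yj)) :
    payoff ρ k β μ c x yi I' Yj ≤ payoff ρ k β μ c x yi I Yj := by
  have hD : (0:ℝ) < ρ * (ρ + k) := by positivity
  have goal_eq : payoff ρ k β μ c x yi I Yj - payoff ρ k β μ c x yi I' Yj
      = ((I - I') * ((x * ρ + μ * k - c * ρ * (ρ + k)) - β * k * (2 * yi + I + I' + Yj)))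
        / (ρ * (ρ + k)) := by
    rw [payoff, payoff]; field_simp; ring
  rw [← sub_nonneg, goal_eq]
  apply div_nonneg _ hD.le
  have e2 : (I - I') * ((x * ρ + μ * k - c * ρ * (ρ + k)) - β * k * (2 * yi + I + I' + Yj))
      = (β * k) * ((I - I') * (2 * Afun ρ k β μ c x - (yi + I) - (yi + I') - Yj)) := by
    rw [Afun]; field_simp; ring
  rw [e2]
  exact mul_nonneg (by positivity) h

/-- If `y₂ ≥ (2/3)A(x)` then the pair with `I² = 0` and
`I¹ = max{0, min{θ − y₁ − y₂, A(x) − y₂/2 − y₁}}` is a Nash equilibrium. -/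
theorem stmt4 (ρ k β θ c μ x y₁ y₂ : ℝ)
    (hρ : 0 < ρ) (hk : 0 < k) (hβ : 0 < β) (hθ : 0 < θ) (hc : 0 ≤ c)
    (hy₁ : 0 ≤ y₁) (hy₂ : 0 ≤ y₂) (hy : y₁ + y₂ ≤ θ)
    (h2 : 2 / 3 * Afun ρ k β μ c x ≤ y₂) :
    IsNash ρ k β θ μ c x y₁ y₂
      (max 0 (min (θ - y₁ - y₂) (Afun ρ k β μ c x - y₂ / 2 - y₁))) 0 := by
  set A := Afun ρ k β μ c x with hA
  set I₁ := max 0 (min (θ - y₁ - y₂) (A - y₂ / 2 - y₁)) with hI₁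
  have hI₁0 : (0:ℝ) ≤ I₁ := le_max_left _ _
  have h2' : A ≤ 3 / 2 * y₂ := by linarith
  have hfeas : y₁ + I₁ + (y₂ + 0) ≤ θ := by
    rcases le_total (min (θ - y₁ - y₂) (A - y₂ / 2 - y₁)) 0 with h | h
    · have e : I₁ = 0 := max_eq_left h
      linarith
    · have e : I₁ = min (θ - y₁ - y₂) (A - y₂ / 2 - y₁) := max_eq_right h
      have := min_le_left (θ - y₁ - y₂) (A - y₂ / 2 - y₁)
      linarith [e ▸ this]
  refine ⟨hI₁0, le_refl 0, hfeas, ?_, ?_⟩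
  · intro I₁' h0 hle
    apply key _ _ _ _ _ _ _ _ _ _ hρ hk hβ
    rcases le_total (θ - y₁ - y₂) (A - y₂ / 2 - y₁) with hm | hm
    · have e : I₁ = θ - y₁ - y₂ := by
        rw [hI₁, min_eq_left hm, max_eq_right (by linarith)]
      have a1 : 0 ≤ I₁ - I₁' := by rw [e]; linarith
      have a2 : 0 ≤ 2 * A - (y₁ + I₁) - (y₁ + I₁') - (y₂ + 0) := by rw [e]; linarith
      exact mul_nonneg a1 a2
    · have e : I₁ = max 0 (A - y₂ / 2 - y₁) := by rw [hI₁, min_eq_right hm]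
      rcases le_total (A - y₂ / 2 - y₁) 0 with hn | hn
      · have e0 : I₁ = 0 := by rw [e, max_eq_left hn]
        have a1 : I₁ - I₁' ≤ 0 := by rw [e0]; linarith
        have a2 : 2 * A - (y₁ + I₁) - (y₁ + I₁') - (y₂ + 0) ≤ 0 := by rw [e0]; linarith
        nlinarith [mul_nonneg (neg_nonneg.2 a1) (neg_nonneg.2 a2)]
      · have e0 : I₁ = A - y₂ / 2 - y₁ := by rw [e, max_eq_right hn]
        nlinarith [sq_nonneg (I₁ - I₁')]
  · intro I₂' h0 hle
    apply key _ _ _ _ _ _ _ _ _ _ hρ hk hβ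
    rcases le_total (θ - y₁ - y₂) (A - y₂ / 2 - y₁) with hm | hm
    · have e : I₁ = θ - y₁ - y₂ := by
        rw [hI₁, min_eq_left hm, max_eq_right (by linarith)]
      have hz : I₂' = 0 := le_antisymm (by rw [e] at hle; linarith) h0
      rw [hz]
      simp
    · have hge : A - y₂ / 2 - y₁ ≤ I₁ := by
        rw [hI₁, min_eq_right hm]; exact le_max_right _ _
      have a1 : (0:ℝ) - I₂' ≤ 0 := by linarith
      have a2 : 2 * A - (y₂ + 0) - (y₂ + I₂') - (y₁ + I₁) ≤ 0 := by linarith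
      nlinarith [mul_nonneg (neg_nonneg.2 a1) (neg_nonneg.2 a2)]
end
end

section
/- In the one-step (static) two-player installation game, assume A(x) > (3/4)θ, y₁ + y₂ < θ, and yᵢ ≤ (2/3)A(x) for i = 1, 2. Then a feasible pair (I¹, I²) is a Nash equilibrium if and only if I¹ + I² = θ − y₁ − y₂ and yᵢ + Iᵢ ≥ 2(θ − A(x)) for i = 1, 2. In particular every Nash equilibrium saturates the total capacity θ, and whenever 2(θ − A(x)) − y₁ and 2(θ − A(x)) − y₂ do not pin down the split, the Nash equilibrium is non-unique. -/
noncomputable section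

lemma payoff_le_iff (ρ k β μ c x yi Ii Ii' Yj : ℝ)
    (hρ : 0 < ρ) (hk : 0 < k) (hβ : 0 < β) :
    payoff ρ k β μ c x yi Ii' Yj ≤ payoff ρ k β μ c x yi Ii Yj ↔
      0 ≤ (Ii - Ii') * (2 * Afun ρ k β μ c x - (2 * yi + Ii + Ii') - Yj) := by
  have hd : 0 < ρ * (ρ + k) := by positivity
  have hbk : (0:ℝ) < β * k / (ρ * (ρ + k)) := by positivity
  have key : payoff ρ k β μ c x yi Ii Yj - payoff ρ k β μ c x yi Ii' Yj
      = (β * k / (ρ * (ρ + k))) *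
        ((Ii - Ii') * (2 * Afun ρ k β μ c x - (2 * yi + Ii + Ii') - Yj)) := by
    unfold payoff Afun
    field_simp
    ring
  rw [← sub_nonneg, key, mul_nonneg_iff_of_pos_left hbk]

/-- Assume `A(x) > (3/4)θ`, `y₁ + y₂ < θ` and `yᵢ ≤ (2/3)A(x)`, `i = 1, 2`. Then a feasible
pair `(I¹, I²)` is a Nash equilibrium iff `I¹ + I² = θ − y₁ − y₂` and
`yᵢ + Iᵢ ≥ 2(θ − A(x))` for `i = 1, 2`.  In particular every Nash equilibrium saturates
the total capacity `θ`, and whenever the constraints `2(θ − A(x)) − yᵢ` do not pin down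
the split, the Nash equilibrium is non-unique. -/
theorem stmt5 (ρ k β θ c μ x y₁ y₂ : ℝ)
    (hρ : 0 < ρ) (hk : 0 < k) (hβ : 0 < β) (hθ : 0 < θ) (hc : 0 ≤ c)
    (hy₁ : 0 ≤ y₁) (hy₂ : 0 ≤ y₂) (hsum : y₁ + y₂ < θ)
    (hA : 3 / 4 * θ < Afun ρ k β μ c x)
    (h1 : y₁ ≤ 2 / 3 * Afun ρ k β μ c x) (h2 : y₂ ≤ 2 / 3 * Afun ρ k β μ c x) :
    (∀ I₁ I₂ : ℝ, 0 ≤ I₁ → 0 ≤ I₂ → y₁ + I₁ + (y₂ + I₂) ≤ θ →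
      (IsNash ρ k β θ μ c x y₁ y₂ I₁ I₂ ↔
        I₁ + I₂ = θ - y₁ - y₂ ∧
        2 * (θ - Afun ρ k β μ c x) ≤ y₁ + I₁ ∧
        2 * (θ - Afun ρ k β μ c x) ≤ y₂ + I₂)) ∧
    (max 0 (2 * (θ - Afun ρ k β μ c x) - y₁) + max 0 (2 * (θ - Afun ρ k β μ c x) - y₂)
        < θ - y₁ - y₂ →
      ∃ I₁ I₂ I₁' I₂' : ℝ, IsNash ρ k β θ μ c x y₁ y₂ I₁ I₂ ∧
        IsNash ρ k β θ μ c x y₁ y₂ I₁' I₂' ∧ (I₁, I₂) ≠ (I₁', I₂')) := by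

  set A := Afun ρ k β μ c x with hAdef
  have main : ∀ I₁ I₂ : ℝ, 0 ≤ I₁ → 0 ≤ I₂ → y₁ + I₁ + (y₂ + I₂) ≤ θ →
      (IsNash ρ k β θ μ c x y₁ y₂ I₁ I₂ ↔
        I₁ + I₂ = θ - y₁ - y₂ ∧ 2 * (θ - A) ≤ y₁ + I₁ ∧ 2 * (θ - A) ≤ y₂ + I₂) := by
    intro I₁ I₂ hI₁ hI₂ hfeas
    constructor
    · rintro ⟨-, -, hs, hbr1, hbr2⟩
      -- Step 1: total capacity saturated
      have hstep1 : y₁ + I₁ + (y₂ + I₂) = θ := by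
        by_contra hne
        have hlt : y₁ + I₁ + (y₂ + I₂) < θ := lt_of_le_of_ne hs hne
        set ε := θ - (y₁ + I₁ + (y₂ + I₂)) with hε
        have hεpos : 0 < ε := by simp [hε]; linarith
        have hb1 := hbr1 (I₁ + ε) (by linarith) (by simp [hε]; linarith)
        have hb2 := hbr2 (I₂ + ε) (by linarith) (by simp [hε]; linarith)
        rw [payoff_le_iff _ _ _ _ _ _ _ _ _ _ hρ hk hβ] at hb1 hb2
        nlinarith [hb1, hb2, hεpos]
      refine ⟨by linarith, ?_, ?_⟩
      · -- need 2(θ-A) ≤ y₁+I₁, i.e. t₂ := 2A - 2y₂ - 2I₂ - (y₁+I₁) ≥ 0, from player 2 dev.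
        rcases eq_or_lt_of_le hI₂ with h0 | hpos
        · linarith
        · by_contra hcon
          push_neg at hcon
          set t := 2 * A - (2 * y₂ + I₂ + I₂) - (y₁ + I₁) with ht
          have htneg : t < 0 := by simp [ht]; linarith
          set δ := min I₂ (-t/2) with hδ
          have hδpos : 0 < δ := lt_min hpos (by linarith)
          have hb := hbr2 (I₂ - δ) (by have := min_le_left I₂ (-t/2); linarith)
            (by linarith)
          rw [payoff_le_iff _ _ _ _ _ _ _ _ _ _ hρ hk hβ] at hb
          have hδle : δ ≤ -t/2 := min_le_right _ _
          nlinarith [hb, hδpos, hδle]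
      · rcases eq_or_lt_of_le hI₁ with h0 | hpos
        · linarith
        · by_contra hcon
          push_neg at hcon
          set t := 2 * A - (2 * y₁ + I₁ + I₁) - (y₂ + I₂) with ht
          have htneg : t < 0 := by simp [ht]; linarith
          set δ := min I₁ (-t/2) with hδ
          have hδpos : 0 < δ := lt_min hpos (by linarith)
          have hb := hbr1 (I₁ - δ) (by have := min_le_left I₁ (-t/2); linarith)
            (by linarith)
          rw [payoff_le_iff _ _ _ _ _ _ _ _ _ _ hρ hk hβ] at hb
          have hδle : δ ≤ -t/2 := min_le_right _ _
          nlinarith [hb, hδpos, hδle]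
    · rintro ⟨hsum', hge1, hge2⟩
      refine ⟨hI₁, hI₂, hfeas, ?_, ?_⟩
      · intro I₁' hI₁' hfeas'
        rw [payoff_le_iff _ _ _ _ _ _ _ _ _ _ hρ hk hβ]
        apply mul_nonneg <;> linarith
      · intro I₂' hI₂' hfeas'
        rw [payoff_le_iff _ _ _ _ _ _ _ _ _ _ hρ hk hβ]
        apply mul_nonneg <;> linarith
  refine ⟨main, ?_⟩
  intro hmax
  set m := 2 * (θ - A) with hm
  set M₁ := max 0 (m - y₁) with hM₁
  set M₂ := max 0 (m - y₂) with hM₂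
  have hM₁0 : 0 ≤ M₁ := le_max_left _ _
  have hM₂0 : 0 ≤ M₂ := le_max_left _ _
  have hM₁m : m - y₁ ≤ M₁ := le_max_right _ _
  have hM₂m : m - y₂ ≤ M₂ := le_max_right _ _
  refine ⟨M₁, θ - y₁ - y₂ - M₁, θ - y₁ - y₂ - M₂, M₂, ?_, ?_, ?_⟩
  · exact (main _ _ hM₁0 (by linarith) (by linarith)).mpr ⟨by ring, by linarith, by linarith⟩
  · exact (main _ _ (by linarith) hM₂0 (by linarith)).mpr ⟨by ring, by linarith, by linarith⟩
  · intro h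
    have h1' : M₁ = θ - y₁ - y₂ - M₂ := congrArg Prod.fst h
    linarith
end
end

section
/- In the one-step (static) two-player installation game, if A(x) ≤ θ/2 and y₁ + y₂ < θ, then every Nash equilibrium (I¹, I²) satisfies y₁ + I¹ + y₂ + I² < θ; that is, the system never reaches the saturated total capacity θ at equilibrium. -/
noncomputable section

lemma no_pos_at_saturation (ρ k β θ c μ x yi Yj Ii : ℝ)
    (hρ : 0 < ρ) (hk : 0 < k) (hβ : 0 < β)
    (hA : Afun ρ k β μ c x ≤ θ / 2)
    (hyi : 0 ≤ yi) (hIi : 0 < Ii) (htot : yi + Ii + Yj = θ)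
    (hnash : ∀ I' : ℝ, 0 ≤ I' → yi + I' + Yj ≤ θ →
      payoff ρ k β μ c x yi I' Yj ≤ payoff ρ k β μ c x yi Ii Yj) : False := by
  have hD : 0 < ρ * (ρ + k) := by positivity
  have hbk : 0 < β * k := by positivity
  have key : ∀ ε : ℝ, 0 < ε → ε ≤ Ii →
      0 ≤ x * ρ + μ * k - β * k * θ - β * k * (yi + Ii) + β * k * ε - c * (ρ * (ρ + k)) := by
    intro ε hε hεI
    have h := hnash (Ii - ε) (by linarith) (by linarith)
    unfold payoff at h
    have h3 : ((yi + (Ii - ε)) * (x * ρ + μ * k - β * k * ((yi + (Ii - ε)) + Yj))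
        - (yi + Ii) * (x * ρ + μ * k - β * k * ((yi + Ii) + Yj))) / (ρ * (ρ + k))
        ≤ c * (Ii - ε) - c * Ii := by
      rw [sub_div]; linarith
    have h4 := (div_le_iff₀ hD).mp h3
    have hθeq : Yj = θ - yi - Ii := by linarith
    subst hθeq
    nlinarith [h4, mul_pos hε hD, hε]
  have hEnd : 0 ≤ x * ρ + μ * k - β * k * θ - β * k * (yi + Ii) - c * (ρ * (ρ + k)) := by
    by_contra h5
    push_neg at h5
    set G := x * ρ + μ * k - β * k * θ - β * k * (yi + Ii) - c * (ρ * (ρ + k)) with hG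
    have hGneg : G < 0 := h5
    have hεpos : 0 < min Ii (-G / (2 * (β * k))) := by
      exact lt_min hIi (div_pos (by linarith) (by positivity))
    have hke := key _ hεpos (min_le_left _ _)
    have hle : β * k * min Ii (-G / (2 * (β * k))) ≤ β * k * (-G / (2 * (β * k))) :=
      mul_le_mul_of_nonneg_left (min_le_right _ _) hbk.le
    have heq2 : β * k * (-G / (2 * (β * k))) = -G / 2 := by
      field_simp
    linarith
  have hA' : x * ρ + μ * k - c * ρ * (ρ + k) ≤ θ / 2 * (2 * (β * k)) := by
    have := (div_le_iff₀ (by positivity : (0:ℝ) < 2 * β * k)).mp hA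
    linarith
  nlinarith [mul_pos hbk (by linarith : (0:ℝ) < yi + Ii)]

/-- If `A(x) ≤ θ/2` and `y₁ + y₂ < θ`, then every Nash equilibrium `(I¹, I²)` of the
one-step game satisfies `y₁ + I¹ + y₂ + I² < θ`: the system never reaches the saturated
total capacity `θ` at equilibrium. -/
theorem stmt6 (ρ k β θ c μ x y₁ y₂ : ℝ)
    (hρ : 0 < ρ) (hk : 0 < k) (hβ : 0 < β) (hθ : 0 < θ) (hc : 0 ≤ c)
    (hy₁ : 0 ≤ y₁) (hy₂ : 0 ≤ y₂) (hsum : y₁ + y₂ < θ)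
    (hA : Afun ρ k β μ c x ≤ θ / 2) :
    ∀ I₁ I₂ : ℝ, IsNash ρ k β θ μ c x y₁ y₂ I₁ I₂ → y₁ + I₁ + (y₂ + I₂) < θ := by
  intro I₁ I₂ ⟨hI₁, hI₂, h3, hN1, hN2⟩
  by_contra h
  have heq : y₁ + I₁ + (y₂ + I₂) = θ := le_antisymm h3 (not_lt.mp h)
  rcases lt_or_ge 0 I₁ with hpos | hle
  · exact no_pos_at_saturation ρ k β θ c μ x y₁ (y₂ + I₂) I₁ hρ hk hβ hA hy₁ hpos heq hN1
  · have hpos2 : 0 < I₂ := by linarith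
    exact no_pos_at_saturation ρ k β θ c μ x y₂ (y₁ + I₁) I₂ hρ hk hβ hA hy₂ hpos2
      (by linarith) hN2
end
end

section
/- Let ȳ = y₁ + y₂ with 0 ≤ ȳ ≤ θ. The aggregate (social planner) profit g(s) = (ȳ + s)·(xρ + μk − βk(ȳ + s))/(ρ(ρ+k)) − c·s has a unique maximizer on [0, θ − ȳ], and this maximizer (the Pareto-optimal cumulative installation) equals max{0, min{A(x) − ȳ, θ − ȳ}}. In particular the unconstrained optimum of g is attained when the aggregate capacity ȳ + s equals A(x), so the Pareto optimum saturates capacity precisely when A(x) ≥ θ, whereas in the Nash problem saturation occurs already for A(x) ≥ (3/4)θ. -/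
/-!
Completing the square gives `g(s) = c ȳ + q A² − q (s − (A − ȳ))²` with `q = βk/(ρ(ρ+k)) > 0`,
so comparing values of `g` is comparing distances to `A − ȳ`, and the maximizer on `[0, θ − ȳ]`
is the projection (clamp) of `A − ȳ` onto that interval.

For the Nash game, a player's payoff is likewise a concave quadratic in its own capacity
`Yᵢ`, increasing as long as `2Yᵢ + Yⱼ < 2A`. Hence at an equilibrium with slack capacity both
`2A ≤ 2Y₁ + Y₂` and `2A ≤ 2Y₂ + Y₁`, and adding them gives `4A ≤ 3(Y₁ + Y₂) < 3θ`.
-/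

noncomputable section

/-- Aggregate (social planner) profit when the initial aggregate capacity is `ybar` and
the cumulative installation is `s`. -/
def planner (ρ k β μ c x ybar s : ℝ) : ℝ :=
  (ybar + s) * (x * ρ + μ * k - β * k * (ybar + s)) / (ρ * (ρ + k)) - c * s

section Clamp

variable {lo hi t s : ℝ}

theorem clamp_mem_Icc (h : lo ≤ hi) : max lo (min t hi) ∈ Set.Icc lo hi :=
  ⟨le_max_left _ _, max_le h (min_le_right _ _)⟩

theorem sq_clamp_sub_le (hs : s ∈ Set.Icc lo hi) : (max lo (min t hi) - t) ^ 2 ≤ (s - t) ^ 2 := by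
  obtain ⟨hlo, hhi⟩ := hs
  rcases le_total t lo with htlo | hlot
  · rw [max_eq_left ((min_le_left _ _).trans htlo)]; nlinarith
  rcases le_total t hi with hthi | hhit
  · rw [min_eq_left hthi, max_eq_right hlot]; nlinarith
  · rw [min_eq_right hhit, max_eq_right (hlo.trans hhi)]; nlinarith

theorem eq_clamp_of_sq_sub_le (hs : s ∈ Set.Icc lo hi)
    (h : (s - t) ^ 2 ≤ (max lo (min t hi) - t) ^ 2) : s = max lo (min t hi) := by
  obtain ⟨hlo, hhi⟩ := hs
  rcases le_total t lo with htlo | hlot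
  · rw [max_eq_left ((min_le_left _ _).trans htlo)] at h ⊢; nlinarith
  rcases le_total t hi with hthi | hhit
  · rw [min_eq_left hthi, max_eq_right hlot] at h ⊢; nlinarith
  · rw [min_eq_right hhit, max_eq_right (hlo.trans hhi)] at h ⊢; nlinarith

theorem clamp_eq_right_iff (h : lo < hi) : max lo (min t hi) = hi ↔ hi ≤ t := by
  rcases le_total hi t with hhit | hthi
  · simp [h.le, hhit]
  · rw [min_eq_left hthi]
    constructor
    · intro heq
      rcases max_choice lo t with hm | hm <;> rw [hm] at heq <;> linarith
    · intro hhit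
      rw [le_antisymm hthi hhit, max_eq_right h.le]

end Clamp

section Quadratic

variable {ρ k β : ℝ} (μ c x : ℝ)

theorem planner_eq_sub_sq (hρ : 0 < ρ) (hk : 0 < k) (hβ : 0 < β) (ybar s : ℝ) :
    planner ρ k β μ c x ybar s =
      c * ybar + β * k / (ρ * (ρ + k)) * Afun ρ k β μ c x ^ 2
        - β * k / (ρ * (ρ + k)) * (s - (Afun ρ k β μ c x - ybar)) ^ 2 := by
  unfold planner Afun
  field_simp
  ring

theorem planner_le_planner_iff (hρ : 0 < ρ) (hk : 0 < k) (hβ : 0 < β) (ybar s s' : ℝ) :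
    planner ρ k β μ c x ybar s ≤ planner ρ k β μ c x ybar s' ↔
      (s' - (Afun ρ k β μ c x - ybar)) ^ 2 ≤ (s - (Afun ρ k β μ c x - ybar)) ^ 2 := by
  have hq : 0 < β * k / (ρ * (ρ + k)) := by positivity
  rw [planner_eq_sub_sq μ c x hρ hk hβ, planner_eq_sub_sq μ c x hρ hk hβ, sub_le_sub_iff_left,
    mul_le_mul_iff_right₀ hq]

theorem payoff_sub_payoff (hρ : 0 < ρ) (hk : 0 < k) (hβ : 0 < β) (z I I' Y : ℝ) :
    payoff ρ k β μ c x z I' Y - payoff ρ k β μ c x z I Y =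
      β * k / (ρ * (ρ + k)) * (I' - I) *
        (2 * Afun ρ k β μ c x - Y - (2 * z + I + I')) := by
  unfold payoff Afun
  field_simp
  ring

end Quadratic

theorem two_mul_Afun_le_of_isBestResponse {ρ k β θ μ c x z I Y : ℝ}
    (hρ : 0 < ρ) (hk : 0 < k) (hβ : 0 < β) (hI : 0 ≤ I) (hslack : z + I + Y < θ)
    (hbest : ∀ I' : ℝ, 0 ≤ I' → z + I' + Y ≤ θ →
      payoff ρ k β μ c x z I' Y ≤ payoff ρ k β μ c x z I Y) :
    2 * Afun ρ k β μ c x ≤ 2 * (z + I) + Y := by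
  by_contra! hlt
  set δ := 2 * Afun ρ k β μ c x - Y - 2 * (z + I)
  have hδ : 0 < δ := by simp only [δ]; linarith
  -- a small enough extra installation stays feasible and strictly raises the payoff
  set ε := min (θ - (z + I + Y)) (δ / 2)
  have hε : 0 < ε := lt_min (by linarith) (by linarith)
  have hεδ : ε ≤ δ / 2 := min_le_right _ _
  have hgain : 0 < payoff ρ k β μ c x z (I + ε) Y - payoff ρ k β μ c x z I Y := by
    rw [payoff_sub_payoff μ c x hρ hk hβ]
    have hfactor : 0 < 2 * Afun ρ k β μ c x - Y - (2 * z + I + (I + ε)) := by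
      simp only [δ] at hεδ; linarith
    have hq : 0 < β * k / (ρ * (ρ + k)) := by positivity
    exact mul_pos (mul_pos hq (by linarith)) hfactor
  have hfeas : z + (I + ε) + Y ≤ θ := by linarith [min_le_left (θ - (z + I + Y)) (δ / 2)]
  linarith [hbest (I + ε) (by linarith) hfeas]

theorem IsNash.total_eq_of_three_fourths_le_Afun {ρ k β θ μ c x y₁ y₂ I₁ I₂ : ℝ}
    (hρ : 0 < ρ) (hk : 0 < k) (hβ : 0 < β) (hA : 3 / 4 * θ ≤ Afun ρ k β μ c x)
    (hN : IsNash ρ k β θ μ c x y₁ y₂ I₁ I₂) : y₁ + I₁ + (y₂ + I₂) = θ := by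
  obtain ⟨hI₁, hI₂, hle, hbest₁, hbest₂⟩ := hN
  refine le_antisymm hle (not_lt.mp fun hlt => ?_)
  have h₁ := two_mul_Afun_le_of_isBestResponse hρ hk hβ hI₁ hlt hbest₁
  have h₂ := two_mul_Afun_le_of_isBestResponse hρ hk hβ hI₂ (by linarith) hbest₂
  linarith

theorem stmt7_general (ρ k β θ c μ x ybar : ℝ)
    (hρ : 0 < ρ) (hk : 0 < k) (hβ : 0 < β)
    (hyθ : ybar ≤ θ) :
    (max 0 (min (Afun ρ k β μ c x - ybar) (θ - ybar)) ∈ Set.Icc (0 : ℝ) (θ - ybar)) ∧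
    (∀ s ∈ Set.Icc (0 : ℝ) (θ - ybar),
      planner ρ k β μ c x ybar s ≤
        planner ρ k β μ c x ybar (max 0 (min (Afun ρ k β μ c x - ybar) (θ - ybar)))) ∧
    (∀ s ∈ Set.Icc (0 : ℝ) (θ - ybar),
      (∀ s' ∈ Set.Icc (0 : ℝ) (θ - ybar),
        planner ρ k β μ c x ybar s' ≤ planner ρ k β μ c x ybar s) →
      s = max 0 (min (Afun ρ k β μ c x - ybar) (θ - ybar))) ∧
    (∀ s : ℝ, planner ρ k β μ c x ybar s ≤
      planner ρ k β μ c x ybar (Afun ρ k β μ c x - ybar)) ∧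
    (ybar < θ →
      (max 0 (min (Afun ρ k β μ c x - ybar) (θ - ybar)) = θ - ybar ↔
        θ ≤ Afun ρ k β μ c x)) ∧
    (3 / 4 * θ ≤ Afun ρ k β μ c x →
      ∀ z₁ z₂ I₁ I₂ : ℝ, 0 ≤ z₁ → 0 ≤ z₂ → z₁ + z₂ < θ →
        IsNash ρ k β θ μ c x z₁ z₂ I₁ I₂ → z₁ + I₁ + (z₂ + I₂) = θ) := by
  have hmem := clamp_mem_Icc (t := Afun ρ k β μ c x - ybar) (sub_nonneg.mpr hyθ)
  refine ⟨hmem, fun s hs => ?_, fun s hs hmax => ?_, fun s => ?_, fun hlt => ?_,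
    fun hA _ _ _ _ _ _ _ hN => hN.total_eq_of_three_fourths_le_Afun hρ hk hβ hA⟩
  · exact (planner_le_planner_iff μ c x hρ hk hβ _ _ _).mpr (sq_clamp_sub_le hs)
  · exact eq_clamp_of_sq_sub_le hs ((planner_le_planner_iff μ c x hρ hk hβ _ _ _).mp (hmax _ hmem))
  · rw [planner_le_planner_iff μ c x hρ hk hβ, sub_self, zero_pow two_ne_zero]
    exact sq_nonneg _
  · rw [clamp_eq_right_iff (sub_pos.mpr hlt), sub_le_sub_iff_right]

/-- The aggregate profit `g(s) = (ȳ + s)(xρ + μk − βk(ȳ + s))/(ρ(ρ+k)) − cs` has a unique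
maximizer on `[0, θ − ȳ]`, equal to `max{0, min{A(x) − ȳ, θ − ȳ}}`; the unconstrained
optimum is attained when the aggregate capacity equals `A(x)`; the Pareto optimum
saturates capacity precisely when `A(x) ≥ θ`, whereas in the Nash problem saturation
occurs already for `A(x) ≥ (3/4)θ`. -/
theorem stmt7 (ρ k β θ c μ x ybar : ℝ)
    (hρ : 0 < ρ) (hk : 0 < k) (hβ : 0 < β) (hθ : 0 < θ) (hc : 0 ≤ c)
    (hy0 : 0 ≤ ybar) (hyθ : ybar ≤ θ) :
    (max 0 (min (Afun ρ k β μ c x - ybar) (θ - ybar)) ∈ Set.Icc (0 : ℝ) (θ - ybar)) ∧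
    (∀ s ∈ Set.Icc (0 : ℝ) (θ - ybar),
      planner ρ k β μ c x ybar s ≤
        planner ρ k β μ c x ybar (max 0 (min (Afun ρ k β μ c x - ybar) (θ - ybar)))) ∧
    (∀ s ∈ Set.Icc (0 : ℝ) (θ - ybar),
      (∀ s' ∈ Set.Icc (0 : ℝ) (θ - ybar),
        planner ρ k β μ c x ybar s' ≤ planner ρ k β μ c x ybar s) →
      s = max 0 (min (Afun ρ k β μ c x - ybar) (θ - ybar))) ∧
    (∀ s : ℝ, planner ρ k β μ c x ybar s ≤
      planner ρ k β μ c x ybar (Afun ρ k β μ c x - ybar)) ∧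
    (ybar < θ →
      (max 0 (min (Afun ρ k β μ c x - ybar) (θ - ybar)) = θ - ybar ↔
        θ ≤ Afun ρ k β μ c x)) ∧
    (3 / 4 * θ ≤ Afun ρ k β μ c x →
      ∀ z₁ z₂ I₁ I₂ : ℝ, 0 ≤ z₁ → 0 ≤ z₂ → z₁ + z₂ < θ →
        IsNash ρ k β θ μ c x z₁ z₂ I₁ I₂ → z₁ + I₁ + (z₂ + I₂) = θ) :=
  stmt7_general ρ k β θ c μ x ybar hρ hk hβ hyθ
end
end
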